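/- arXiv:2209.14853 — 6 statements merged into one kernel-verified Lean document; each statement's English description precedes it below -/
import Mathlib

section
/- Let $c_0 > 0$, $c > 0$, $c_i \in (0, c]$ for $i \ge 1$, and $p \in (0,1)$. Then $\sum_{t=1}^{T} \frac{c_{t+1}}{(c_0 + \sum_{i=1}^{t} c_i)^p} \le \frac{3c}{c_0^p} + \frac{1}{1-p}\left(\sum_{i=1}^{T} c_i\right)^{1-p}$. -/
open Finset Real

theorem auxkey (a b d p : ℝ) (ha : 0 ≤ a) (hab : a ≤ b) (hb : 0 < b) (hbd : b ≤ d)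
    (hp0 : 0 < p) (hp1 : p < 1) :
    (b - a) / d ^ p ≤ (b ^ (1-p) - a ^ (1-p)) / (1 - p) := by
  have hs : 0 < 1 - p := by linarith
  have hbp : (0:ℝ) < b ^ p := Real.rpow_pos_of_pos hb p
  have hdp : b ^ p ≤ d ^ p := Real.rpow_le_rpow hb.le hbd hp0.le
  have h1 : (b - a) / d ^ p ≤ (b - a) / b ^ p :=
    div_le_div_of_nonneg_left (by linarith) hbp hdp
  refine h1.trans ?_
  rw [div_le_div_iff₀ hbp hs]
  have hbern : (1 + (a/b - 1)) ^ (1-p) ≤ 1 + (1-p) * (a/b - 1) :=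
    rpow_one_add_le_one_add_mul_self (by
      have : 0 ≤ a/b := div_nonneg ha hb.le
      linarith) hs.le (by linarith)
  have hab' : a ^ (1-p) = b ^ (1-p) * (a/b) ^ (1-p) := by
    rw [← Real.mul_rpow hb.le (div_nonneg ha hb.le), mul_div_cancel₀ _ hb.ne']
  have h2 : a ^ (1-p) ≤ b ^ (1-p) * (1 + (1-p) * (a/b - 1)) := by
    rw [hab']
    apply mul_le_mul_of_nonneg_left _ (Real.rpow_nonneg hb.le _)
    simpa using hbern
  have hsplit : b ^ (1-p) * b ^ p = b := by
    rw [← Real.rpow_add hb]; simp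
  have h3 : b ^ (1-p) * (1 + (1-p) * (a/b - 1)) =
      b ^ (1-p) - (1-p) * (b - a) * (b ^ (1-p) / b) := by
    field_simp
    ring
  have h5 : (b ^ (1-p) / b) * b ^ p = 1 := by
    rw [div_mul_eq_mul_div, hsplit, div_self hb.ne']
  have h6 : (1-p)*(b-a)*(b^(1-p)/b) ≤ b^(1-p) - a^(1-p) := by
    have := h2.trans_eq h3; linarith
  have h7 := mul_le_mul_of_nonneg_right h6 hbp.le
  have h8 : (1-p)*(b-a)*(b^(1-p)/b)*(b^p) = (b-a)*(1-p) := by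
    rw [mul_assoc ((1-p)*(b-a)), h5]; ring
  linarith

theorem stmt2 (T : ℕ) (hT : 1 ≤ T) (c₀ cmax : ℝ) (hc0 : 0 < c₀) (hcmax : 0 < cmax)
    (c : ℕ → ℝ) (hc : ∀ i, 1 ≤ i → 0 < c i ∧ c i ≤ cmax)
    (p : ℝ) (hp0 : 0 < p) (hp1 : p < 1) :
    ∑ t ∈ Icc 1 T, c (t + 1) / (c₀ + ∑ i ∈ Icc 1 t, c i) ^ p ≤
      3 * cmax / c₀ ^ p + (1 / (1 - p)) * (∑ i ∈ Icc 1 T, c i) ^ (1 - p) := by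
  have hs : 0 < 1 - p := by linarith
  let S : ℕ → ℝ := fun t => ∑ i ∈ Icc 1 t, c i
  have hrw : ∀ t, (∑ i ∈ Icc 1 t, c i) = S t := fun _ => rfl
  simp only [hrw]
  have hcpos : ∀ i, 1 ≤ i → 0 < c i := fun i hi => (hc i hi).1
  have hcle : ∀ i, 1 ≤ i → c i ≤ cmax := fun i hi => (hc i hi).2
  have hSnn : ∀ t, 0 ≤ S t := fun t =>
    Finset.sum_nonneg fun i hi => (hcpos i (mem_Icc.mp hi).1).le
  have hSmono : Monotone S := by
    intro a b hab
    exact Finset.sum_le_sum_of_subset_of_nonneg (Icc_subset_Icc_right hab)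
      (fun i hi _ => (hcpos i (mem_Icc.mp hi).1).le)
  have hSsucc : ∀ t, S (t + 1) = S t + c (t + 1) := fun t =>
    Finset.sum_Icc_succ_top (Nat.le_add_left 1 t) c
  let g : ℕ → ℝ := fun t => max (S (t + 1) - c 1 - cmax) 0
  have hgeq : ∀ t, g t = max (S (t + 1) - c 1 - cmax) 0 := fun _ => rfl
  have hgnn : ∀ t, 0 ≤ g t := fun t => le_max_right _ _
  have hgmono : Monotone g := by
    intro a b hab
    have := hSmono (Nat.succ_le_succ hab)
    exact max_le_max (by linarith) le_rfl
  let F : ℕ → ℝ := fun t => g t ^ (1 - p) / (1 - p)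
  have hFeq : ∀ t, F t = g t ^ (1 - p) / (1 - p) := fun _ => rfl
  have hFmono : Monotone F := by
    intro a b hab
    rw [hFeq, hFeq]
    gcongr
    exact hgmono hab
  rw [← Finset.sum_filter_add_sum_filter_not (Icc 1 T) (fun t => S t ≤ 2 * cmax)]
  have head : ∑ t ∈ (Icc 1 T).filter (fun t => S t ≤ 2 * cmax), c (t + 1) / (c₀ + S t) ^ p
      ≤ 3 * cmax / c₀ ^ p := by
    set A := (Icc 1 T).filter (fun t => S t ≤ 2 * cmax) with hA
    have hsum3 : ∑ t ∈ A, c (t + 1) ≤ 3 * cmax := by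
      by_cases hAe : A.Nonempty
      · set k := A.max' hAe with hk
        have hkA : k ∈ A := A.max'_mem hAe
        obtain ⟨hkI, hkS⟩ := Finset.mem_filter.mp hkA
        have hsub : A ⊆ Icc 1 k := by
          intro t ht
          have h1 := (Finset.mem_filter.mp ht).1
          exact mem_Icc.mpr ⟨(mem_Icc.mp h1).1, Finset.le_max' A t ht⟩
        have h4 : ∑ t ∈ A, c (t + 1) ≤ ∑ t ∈ Icc 1 k, c (t + 1) :=
          Finset.sum_le_sum_of_subset_of_nonneg hsub
            (fun i _ _ => (hcpos (i + 1) (by omega)).le)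
        have h5 : ∀ m : ℕ, ∑ t ∈ Icc 1 m, c (t + 1) ≤ S (m + 1) := by
          intro m
          induction m with
          | zero => simpa using hSnn 1
          | succ n ih =>
            rw [Finset.sum_Icc_succ_top (Nat.le_add_left 1 n), hSsucc (n + 1)]
            linarith
        have h6 := h5 k
        have h7 : c (k + 1) ≤ cmax := hcle (k + 1) (by omega)
        have h8 := hSsucc k
        linarith
      · rw [Finset.not_nonempty_iff_eq_empty.mp hAe]
        simp only [Finset.sum_empty]
        positivity
        
    calc ∑ t ∈ A, c (t + 1) / (c₀ + S t) ^ p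
        ≤ ∑ t ∈ A, c (t + 1) / c₀ ^ p := by
          apply Finset.sum_le_sum
          intro t ht
          have h1 := (Finset.mem_filter.mp ht).1
          exact div_le_div_of_nonneg_left (hcpos (t + 1) (by omega)).le
            (Real.rpow_pos_of_pos hc0 p)
            (Real.rpow_le_rpow hc0.le (by linarith [hSnn t]) hp0.le)
      _ = (∑ t ∈ A, c (t + 1)) / c₀ ^ p := by rw [Finset.sum_div]
      _ ≤ 3 * cmax / c₀ ^ p := by
          gcongr
  have tail : ∑ t ∈ (Icc 1 T).filter (fun t => ¬ S t ≤ 2 * cmax), c (t + 1) / (c₀ + S t) ^ p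
      ≤ (1 / (1 - p)) * S T ^ (1 - p) := by
    have hterm : ∀ t ∈ (Icc 1 T).filter (fun t => ¬ S t ≤ 2 * cmax),
        c (t + 1) / (c₀ + S t) ^ p ≤ F t - F (t - 1) := by
      intro t ht
      obtain ⟨htI, htS⟩ := Finset.mem_filter.mp ht
      obtain ⟨ht1, htT⟩ := mem_Icc.mp htI
      push_neg at htS
      have hc1 : 0 < c 1 := hcpos 1 le_rfl
      have hc1le : c 1 ≤ cmax := hcle 1 le_rfl
      have hct : 0 < c (t + 1) := hcpos (t + 1) (by omega)
      have hctle : c (t + 1) ≤ cmax := hcle (t + 1) (by omega)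
      have htsub : t - 1 + 1 = t := Nat.succ_pred_eq_of_pos ht1
      have hst := hSsucc t
      have hgt : g t = S (t + 1) - c 1 - cmax := by
        rw [hgeq]; apply max_eq_left; linarith
      have hgt1 : g (t - 1) = S t - c 1 - cmax := by
        rw [hgeq, htsub]; apply max_eq_left; linarith
      have hb : 0 < g t := by rw [hgt]; linarith
      have hbd : g t ≤ c₀ + S t := by rw [hgt]; linarith
      have hba : g t - g (t - 1) = c (t + 1) := by rw [hgt, hgt1]; linarith
      have key := auxkey (g (t - 1)) (g t) (c₀ + S t) p (hgnn (t - 1))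
        (hgmono (Nat.sub_le t 1)) hb hbd hp0 hp1
      rw [hba] at key
      rw [hFeq, hFeq, ← sub_div]
      exact key
    calc ∑ t ∈ (Icc 1 T).filter (fun t => ¬ S t ≤ 2 * cmax), c (t + 1) / (c₀ + S t) ^ p
        ≤ ∑ t ∈ (Icc 1 T).filter (fun t => ¬ S t ≤ 2 * cmax), (F t - F (t - 1)) :=
          Finset.sum_le_sum hterm
      _ ≤ ∑ t ∈ Icc 1 T, (F t - F (t - 1)) :=
          Finset.sum_le_sum_of_subset_of_nonneg (Finset.filter_subset _ _)
            (fun i _ _ => sub_nonneg.mpr (hFmono (Nat.sub_le i 1)))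
      _ = F T - F 0 := by
          have htel : ∀ n : ℕ, ∑ t ∈ Icc 1 n, (F t - F (t - 1)) = F n - F 0 := by
            intro n
            induction n with
            | zero => simp
            | succ m ih =>
              rw [Finset.sum_Icc_succ_top (Nat.le_add_left 1 m), ih]
              have : m + 1 - 1 = m := by omega
              rw [this]
              ring
          exact htel T
      _ ≤ F T := by
          have : 0 ≤ F 0 := div_nonneg (Real.rpow_nonneg (hgnn 0) _) hs.le
          linarith
      _ ≤ (1 / (1 - p)) * S T ^ (1 - p) := by
          have hgTle : g T ≤ S T := by
            rw [hgeq]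
            apply max_le _ (hSnn T)
            have := hSsucc T
            have h7 : c (T + 1) ≤ cmax := hcle (T + 1) (by omega)
            have hc1 : 0 < c 1 := hcpos 1 le_rfl
            linarith
          have h10 := Real.rpow_le_rpow (hgnn T) hgTle hs.le
          rw [hFeq, div_eq_inv_mul, one_div]
          exact mul_le_mul_of_nonneg_left h10 (inv_nonneg.mpr hs.le)
  exact add_le_add head tail
end

section
/- Let $c_0 > 0$, $c > 0$, and $c_i \in (0, c]$ for $i \ge 1$, with $p \in (0,1)$. Then $\sum_{t=1}^{T} \frac{c_{t+1}}{(c_0 + \sum_{i=1}^{t-1} c_i)^p} \le \frac{6c}{c_0^p} + \frac{1}{1-p}\left(\sum_{i=1}^{T} c_i\right)^{1-p}$, where the sum $\sum_{i=1}^{t-1} c_i$ is empty (equal to $0$) when $t = 1$. -/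
/-!
Write `S t = c₁ + ⋯ + c_t`, so that `c_{t+1} = S_{t+1} - S_t`. Trading the denominator
`(c₀ + S_{t-1})^p` for `S_{t+1}^p` costs at most
`cmax ((c₀ + S_{t-1})^{-p} - (c₀ + S_{t+1})^{-p})`, and these errors telescope (with step two)
to at most `2 cmax / c₀^p`. After the trade each term is bounded, by concavity of
`x ↦ x^{1-p}`, by `(S_{t+1}^{1-p} - S_t^{1-p}) / (1-p)`, which telescopes to the main term.
The last summand, whose numerator `c_{T+1}` lies outside `S_T`, is bounded directly by
`cmax / c₀^p`.
-/

open Finset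

/-- Tangent-line inequality for the concave function `x ↦ x ^ (1 - p)`. -/
lemma sub_div_rpow_le_rpow_sub_rpow_div {p a b : ℝ} (hp0 : 0 ≤ p) (hp1 : p < 1)
    (ha : 0 ≤ a) (hab : a ≤ b) :
    (b - a) / b ^ p ≤ (b ^ (1 - p) - a ^ (1 - p)) / (1 - p) := by
  have h1p : 0 < 1 - p := by linarith
  rcases hab.eq_or_lt' with rfl | hb
  · simp
  have hb : 0 < b := ha.trans_lt hb
  have hgm : b ^ p * a ^ (1 - p) ≤ p * b + (1 - p) * a :=
    Real.geom_mean_le_arith_mean2_weighted hp0 h1p.le hb.le ha (by ring)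
  have hbb : b ^ p * b ^ (1 - p) = b := by
    rw [← Real.rpow_add hb]; norm_num
  rw [div_le_div_iff₀ (Real.rpow_pos_of_pos hb p) h1p]
  nlinarith

lemma sum_range_sub_div_rpow_le {p : ℝ} (hp0 : 0 ≤ p) (hp1 : p < 1) {A : ℕ → ℝ}
    (hA0 : 0 ≤ A 0) (hA : Monotone A) (n : ℕ) :
    ∑ s ∈ range n, (A (s + 1) - A s) / A (s + 1) ^ p ≤
      (A n ^ (1 - p) - A 0 ^ (1 - p)) / (1 - p) := by
  calc ∑ s ∈ range n, (A (s + 1) - A s) / A (s + 1) ^ p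
      ≤ ∑ s ∈ range n, (A (s + 1) ^ (1 - p) - A s ^ (1 - p)) / (1 - p) :=
        sum_le_sum fun s _ => sub_div_rpow_le_rpow_sub_rpow_div hp0 hp1
          (hA0.trans (hA s.zero_le)) (hA s.le_succ)
    _ = (A n ^ (1 - p) - A 0 ^ (1 - p)) / (1 - p) := by
        rw [← sum_div, sum_range_sub (fun s => A s ^ (1 - p))]

lemma div_le_div_add_mul_inv_sub_inv {d M X Y Z : ℝ} (hd : 0 ≤ d) (hdM : d ≤ M)
    (hX : 0 < X) (hXZ : X ≤ Z) (hY : 0 < Y) (hYZ : Y ≤ Z) :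
    d / X ≤ d / Y + M * (X⁻¹ - Z⁻¹) :=
  calc d / X = d / Z + d * (X⁻¹ - Z⁻¹) := by simp only [div_eq_mul_inv]; ring
    _ ≤ d / Y + M * (X⁻¹ - Z⁻¹) :=
      add_le_add (div_le_div_of_nonneg_left hd hY hYZ)
        (mul_le_mul_of_nonneg_right hdM (sub_nonneg.2 (inv_anti₀ hX hXZ)))

lemma Finset.sum_range_sub_add_two {G : Type*} [AddCommGroup G] (f : ℕ → G) (n : ℕ) :
    ∑ i ∈ range n, (f i - f (i + 2)) = f 0 + f 1 - f n - f (n + 1) := by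
  induction n with
  | zero => simp
  | succ n ih => rw [sum_range_succ, ih]; abel

theorem sum_range_sub_div_add_rpow_le {S : ℕ → ℝ} {M c₀ p : ℝ} (hS0 : 0 ≤ S 0)
    (hS : StrictMono S) (hSM : ∀ n, S (n + 1) - S n ≤ M) (hc₀ : 0 < c₀) (hp0 : 0 ≤ p)
    (hp1 : p < 1) (n : ℕ) :
    ∑ s ∈ range (n + 1), (S (s + 2) - S (s + 1)) / (c₀ + S s) ^ p ≤
      3 * M / c₀ ^ p + S (n + 1) ^ (1 - p) / (1 - p) := by
  have hSnn : ∀ s, 0 ≤ S s := fun s => hS0.trans (hS.monotone s.zero_le)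
  have hM : 0 ≤ M := (sub_nonneg.2 (hS.monotone (Nat.le_succ 0))).trans (hSM 0)
  have hc₀p : 0 < c₀ ^ p := Real.rpow_pos_of_pos hc₀ p
  have hpow_le : ∀ {x y : ℝ}, 0 ≤ x → x ≤ y → x ^ p ≤ y ^ p := fun hx hxy =>
    Real.rpow_le_rpow hx hxy hp0
  have hshift : ∀ s, (c₀ + S s) ^ p ≤ (c₀ + S (s + 2)) ^ p := fun s =>
    hpow_le (by linarith [hSnn s]) (by linarith [hS.monotone (Nat.le_add_right s 2)])
  set F : ℕ → ℝ := fun s => ((c₀ + S s) ^ p)⁻¹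
  have hF : ∀ s, 0 ≤ F s ∧ F s ≤ (c₀ ^ p)⁻¹ := fun s =>
    ⟨inv_nonneg.2 (Real.rpow_nonneg (by linarith [hSnn s]) p),
      inv_anti₀ hc₀p (hpow_le hc₀.le (by linarith [hSnn s]))⟩
  have hterm : ∀ s, (S (s + 2) - S (s + 1)) / (c₀ + S s) ^ p ≤
      (S (s + 2) - S (s + 1)) / S (s + 2) ^ p + M * (F s - F (s + 2)) := fun s =>
    div_le_div_add_mul_inv_sub_inv (sub_nonneg.2 (hS.monotone s.succ.le_succ)) (hSM (s + 1))
      (Real.rpow_pos_of_pos (by linarith [hSnn s]) p) (hshift s)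
      (Real.rpow_pos_of_pos (hS0.trans_lt (hS (Nat.succ_pos (s + 1)))) p)
      (hpow_le (hSnn _) (by linarith))
  have hmain : ∑ s ∈ range n, (S (s + 2) - S (s + 1)) / S (s + 2) ^ p ≤
      S (n + 1) ^ (1 - p) / (1 - p) :=
    (sum_range_sub_div_rpow_le hp0 hp1 (hSnn 1)
      (hS.monotone.comp fun _ _ => Nat.succ_le_succ) n).trans
      (div_le_div_of_nonneg_right (sub_le_self _ (Real.rpow_nonneg (hSnn 1) _)) (by linarith))
  have herror : ∑ s ∈ range n, M * (F s - F (s + 2)) ≤ 2 * M / c₀ ^ p := by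
    rw [← mul_sum, sum_range_sub_add_two, div_eq_mul_inv]
    nlinarith [hF 0, hF 1, hF n, hF (n + 1)]
  have hlast : (S (n + 2) - S (n + 1)) / (c₀ + S n) ^ p ≤ M / c₀ ^ p :=
    div_le_div₀ hM (hSM (n + 1)) hc₀p (hpow_le hc₀.le (by linarith [hSnn n]))
  calc ∑ s ∈ range (n + 1), (S (s + 2) - S (s + 1)) / (c₀ + S s) ^ p
      ≤ ∑ s ∈ range n, ((S (s + 2) - S (s + 1)) / S (s + 2) ^ p + M * (F s - F (s + 2)))
          + M / c₀ ^ p := by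
        rw [sum_range_succ]; exact add_le_add (sum_le_sum fun s _ => hterm s) hlast
    _ ≤ 3 * M / c₀ ^ p + S (n + 1) ^ (1 - p) / (1 - p) := by
        rw [sum_add_distrib]
        have : 3 * M / c₀ ^ p = 2 * M / c₀ ^ p + M / c₀ ^ p := by ring
        linarith

theorem stmt3_general (T : ℕ) (hT : 1 ≤ T) (c₀ cmax : ℝ) (hc0 : 0 < c₀)
    (c : ℕ → ℝ) (hc : ∀ i, 1 ≤ i → 0 < c i ∧ c i ≤ cmax)
    (p : ℝ) (hp0 : 0 < p) (hp1 : p < 1) :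
    ∑ t ∈ Icc 1 T, c (t + 1) / (c₀ + ∑ i ∈ Icc 1 (t - 1), c i) ^ p ≤
      6 * cmax / c₀ ^ p + (1 / (1 - p)) * (∑ i ∈ Icc 1 T, c i) ^ (1 - p) := by
  set S : ℕ → ℝ := fun n => ∑ i ∈ Icc 1 n, c i
  have hS_succ : ∀ n, S (n + 1) = S n + c (n + 1) := fun n => sum_Icc_succ_top (by omega) c
  have hS : StrictMono S := strictMono_nat_of_lt_succ fun n => by
    rw [hS_succ]; linarith [(hc (n + 1) (by omega)).1]
  obtain ⟨n, rfl⟩ : ∃ n, T = n + 1 := ⟨T - 1, by omega⟩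
  have hLHS : ∑ t ∈ Icc 1 (n + 1), c (t + 1) / (c₀ + S (t - 1)) ^ p =
      ∑ s ∈ range (n + 1), (S (s + 2) - S (s + 1)) / (c₀ + S s) ^ p := by
    rw [← Ico_add_one_right_eq_Icc, sum_Ico_eq_sum_range]
    refine sum_congr rfl fun s _ => ?_
    rw [hS_succ (s + 1), add_comm 1 s, Nat.add_sub_cancel]
    ring_nf
  have hmain := sum_range_sub_div_add_rpow_le (S := S) (M := cmax) (by simp [S]) hS
    (fun k => by rw [hS_succ]; linarith [(hc (k + 1) (by omega)).2]) hc0 hp0.le hp1 n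
  have hcmax : 0 ≤ cmax := (hc 1 le_rfl).1.le.trans (hc 1 le_rfl).2
  rw [hLHS, one_div_mul_eq_div]
  refine hmain.trans (add_le_add_left ?_ _)
  gcongr
  norm_num

theorem stmt3 (T : ℕ) (hT : 1 ≤ T) (c₀ cmax : ℝ) (hc0 : 0 < c₀) (hcmax : 0 < cmax)
    (c : ℕ → ℝ) (hc : ∀ i, 1 ≤ i → 0 < c i ∧ c i ≤ cmax)
    (p : ℝ) (hp0 : 0 < p) (hp1 : p < 1) :
    ∑ t ∈ Icc 1 T, c (t + 1) / (c₀ + ∑ i ∈ Icc 1 (t - 1), c i) ^ p ≤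
      6 * cmax / c₀ ^ p + (1 / (1 - p)) * (∑ i ∈ Icc 1 T, c i) ^ (1 - p) :=
  stmt3_general T hT c₀ cmax hc0 c hc p hp0 hp1
end

section
/- Let $c > 0$ and $c_i \in (0, c]$ for $1 \le i \le T$. Then $\sum_{t=1}^{T} \frac{c_t}{(1 + \sum_{i=1}^{t-1} c_i)^{4/3}} \le 12 + 2c$, where the sum $\sum_{i=1}^{t-1} c_i$ is empty (equal to $0$) when $t = 1$. -/
open Finset

lemma key_ineq (S a cmax : ℝ) (hS : 1 ≤ S) (ha : 0 < a) (hac : a ≤ cmax) :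
    a / S ^ ((4:ℝ)/3) ≤
      (12 / S ^ ((1:ℝ)/3) + 2*cmax/S) - (12 / (S+a) ^ ((1:ℝ)/3) + 2*cmax/(S+a)) := by
  have hS0 : (0:ℝ) < S := by linarith
  have hSa0 : (0:ℝ) < S + a := by linarith
  set x := S ^ ((1:ℝ)/3) with hx
  set y := (S + a) ^ ((1:ℝ)/3) with hy
  have hx3 : x ^ 3 = S := by
    rw [hx, ← Real.rpow_natCast (S ^ ((1:ℝ)/3)) 3, ← Real.rpow_mul hS0.le]
    norm_num
  have hy3 : y ^ 3 = S + a := by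
    rw [hy, ← Real.rpow_natCast ((S+a) ^ ((1:ℝ)/3)) 3, ← Real.rpow_mul hSa0.le]
    norm_num
  have hS43 : S ^ ((4:ℝ)/3) = x ^ 4 := by
    rw [hx, ← Real.rpow_natCast (S ^ ((1:ℝ)/3)) 4, ← Real.rpow_mul hS0.le]
    norm_num
  have hx1 : 1 ≤ x := Real.one_le_rpow hS (by norm_num)
  have hx0 : 0 < x := by linarith
  have hxy : x ≤ y := Real.rpow_le_rpow hS0.le (by linarith) (by norm_num)
  have hy0 : 0 < y := by linarith
  rcases le_or_gt a S with hcase | hcase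
  · -- a ≤ S: use the 12-term
    have h2 : 2*cmax/(S+a) ≤ 2*cmax/S :=
      div_le_div_of_nonneg_left (by linarith) hS0 (by linarith)
    have hy32 : y ^ 3 ≤ 2 * x ^ 3 := by rw [hy3, hx3]; linarith
    have hy2x : y ≤ 2 * x := by nlinarith [sq_nonneg (y - 2*x), sq_nonneg (y + 2*x)]
    have hxy2 : x * y ^ 2 ≤ y ^ 3 := by nlinarith [mul_le_mul_of_nonneg_right hxy (sq_nonneg y)]
    have hx2y : x ^ 2 * y ≤ 2 * x ^ 3 := by nlinarith [mul_le_mul_of_nonneg_left hy2x (sq_nonneg x)]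
    have hkey : y * (y^2 + x*y + x^2) ≤ 12 * x^3 := by nlinarith [pow_pos hx0 3]
    have h12 : a / S ^ ((4:ℝ)/3) ≤ 12 / x - 12 / y := by
      rw [hS43, div_sub_div _ _ (ne_of_gt hx0) (ne_of_gt hy0),
        div_le_div_iff₀ (by positivity) (by positivity)]
      have ha' : a = y^3 - x^3 := by rw [hy3, hx3]; ring
      rw [ha']
      nlinarith [mul_le_mul_of_nonneg_left hkey (mul_nonneg (sub_nonneg.2 hxy) hx0.le)]
    linarith
  · -- a > S: use the cmax term
    have h12 : 12 / y ≤ 12 / x := div_le_div_of_nonneg_left (by norm_num) hx0 hxy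
    have hS43ge : S ≤ S ^ ((4:ℝ)/3) := by
      nth_rewrite 1 [← Real.rpow_one S]
      exact Real.rpow_le_rpow_of_exponent_le hS (by norm_num)
    have h1 : a / S ^ ((4:ℝ)/3) ≤ a / S :=
      div_le_div_of_nonneg_left ha.le hS0 hS43ge
    have h2 : a / S ≤ 2*cmax/S - 2*cmax/(S+a) := by
      rw [div_sub_div _ _ (ne_of_gt hS0) (ne_of_gt hSa0),
        div_le_div_iff₀ hS0 (by positivity)]
      have h3 : S + a ≤ 2 * cmax := by linarith
      nlinarith [mul_le_mul_of_nonneg_left h3 (mul_pos ha hS0).le]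
    linarith

theorem stmt4 (T : ℕ) (hT : 1 ≤ T) (cmax : ℝ) (hcmax : 0 < cmax)
    (c : ℕ → ℝ) (hc : ∀ i, 1 ≤ i → 0 < c i ∧ c i ≤ cmax) :
    ∑ t ∈ Icc 1 T, c t / (1 + ∑ i ∈ Icc 1 (t - 1), c i) ^ ((4 : ℝ) / 3) ≤
      12 + 2 * cmax := by
  set S : ℕ → ℝ := fun t => 1 + ∑ i ∈ Icc 1 t, c i with hSdef
  set F : ℕ → ℝ := fun t => 12 / (S t) ^ ((1:ℝ)/3) + 2*cmax/(S t) with hFdef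
  have hS1 : ∀ t, 1 ≤ S t := by
    intro t
    have : 0 ≤ ∑ i ∈ Icc 1 t, c i :=
      Finset.sum_nonneg fun i hi => ((hc i (Finset.mem_Icc.mp hi).1).1).le
    simp only [hSdef]; linarith
  have hSsucc : ∀ k, S (k+1) = S k + c (k+1) := by
    intro k
    simp only [hSdef]
    rw [Finset.sum_Icc_succ_top (Nat.le_add_left 1 k)]
    ring
  have hstep : ∀ k, c (k+1) / (S k) ^ ((4:ℝ)/3) ≤ F k - F (k+1) := by
    intro k
    have hck := hc (k+1) (Nat.le_add_left 1 k)
    have := key_ineq (S k) (c (k+1)) cmax (hS1 k) hck.1 hck.2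
    simp only [hFdef]
    rw [hSsucc k]
    exact this
  have hre : ∑ t ∈ Icc 1 T, c t / (1 + ∑ i ∈ Icc 1 (t - 1), c i) ^ ((4 : ℝ) / 3)
      = ∑ k ∈ range T, c (k+1) / (S k) ^ ((4:ℝ)/3) := by
    rw [← Finset.Ico_add_one_right_eq_Icc, Finset.sum_Ico_eq_sum_range]
    simp only [Nat.succ_sub_one, hSdef]
    apply Finset.sum_congr rfl
    intro k _
    have h1 : 1 + k = k + 1 := by omega
    rw [h1, Nat.add_sub_cancel]
  rw [hre]
  have htel : ∑ k ∈ range T, (F k - F (k+1)) = F 0 - F T :=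
    Finset.sum_range_sub' F T
  have hF0 : F 0 = 12 + 2 * cmax := by
    simp only [hFdef, hSdef]
    norm_num
  have hFT : 0 ≤ F T := by
    have h1 := hS1 T
    have : (0:ℝ) < S T := by linarith
    positivity
  calc ∑ k ∈ range T, c (k+1) / (S k) ^ ((4:ℝ)/3)
      ≤ ∑ k ∈ range T, (F k - F (k+1)) := Finset.sum_le_sum fun k _ => hstep k
    _ = F 0 - F T := htel
    _ ≤ 12 + 2 * cmax := by rw [hF0]; linarith
end

section
/- For all real numbers $x, y$ with $0 < x \le y \le 1$ and all $\ell \in (0, 1]$, it holds that $\left(\frac{(1 - x^{1/\ell})^2}{x^2} - \frac{(1 - y^{1/\ell})^2}{y^2}\right)^2 \le \frac{y^2 - x^2}{\ell^2 x^4 y^2}$. -/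
/-!
Put `c = 1 / ℓ ≥ 1` and `f u = (1 - u ^ c) ^ 2 / u ^ 2`. Since
`f' u = -2 (1 - u ^ c) (1 + (c - 1) u ^ c) / u ^ 3` and `(1 - s) (1 + (c - 1) s) ≤ c` for
`s ∈ [0, 1]`, the derivative of `f` is dominated by that of `-c / u ^ 2` on `(0, 1]`, so
`|f x - f y| ≤ c (y ^ 2 - x ^ 2) / (x ^ 2 y ^ 2)`. Squaring loses only the factor
`(y ^ 2 - x ^ 2) / y ^ 2 ≤ 1`.
-/

open Set

lemma abs_sub_le_sub_of_abs_deriv_le_deriv {f f' g g' : ℝ → ℝ} {a b : ℝ} (hab : a ≤ b)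
    (hf : ∀ t ∈ Icc a b, HasDerivAt f (f' t) t) (hg : ∀ t ∈ Icc a b, HasDerivAt g (g' t) t)
    (bound : ∀ t ∈ Ico a b, |f' t| ≤ g' t) :
    |f b - f a| ≤ g b - g a := by
  have key := image_norm_le_of_norm_deriv_right_le_deriv_boundary'
    (f := fun t => f t - f a) (B := fun t => g t - g a)
    (fun t ht => ((hf t ht).sub_const (f a)).continuousAt.continuousWithinAt)
    (fun t ht => ((hf t (Ico_subset_Icc_self ht)).sub_const (f a)).hasDerivWithinAt)
    (by simp) (fun t ht => ((hg t ht).sub_const (g a)).continuousAt.continuousWithinAt)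
    (fun t ht => ((hg t (Ico_subset_Icc_self ht)).sub_const (g a)).hasDerivWithinAt) bound
  exact key (right_mem_Icc.2 hab)

lemma hasDerivAt_one_sub_rpow_sq_div_sq (c : ℝ) {t : ℝ} (ht : 0 < t) :
    HasDerivAt (fun u : ℝ => (1 - u ^ c) ^ 2 / u ^ 2)
      (-2 * (1 - t ^ c) * (1 + (c - 1) * t ^ c) / t ^ 3) t := by
  have h := (((Real.hasDerivAt_rpow_const (p := c) (Or.inl ht.ne')).const_sub 1).pow 2).div
    (hasDerivAt_pow 2 t) (by positivity)
  refine h.congr_deriv ?_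
  simp only [Pi.pow_apply, Real.rpow_sub ht, Real.rpow_one]
  field_simp
  ring

lemma abs_sub_one_sub_rpow_sq_div_sq_le {c x y : ℝ} (hc : 1 ≤ c) (hx : 0 < x) (hxy : x ≤ y)
    (hy : y ≤ 1) :
    |(1 - x ^ c) ^ 2 / x ^ 2 - (1 - y ^ c) ^ 2 / y ^ 2| ≤ c / x ^ 2 - c / y ^ 2 := by
  have hpos : ∀ t ∈ Icc x y, 0 < t := fun t ht => hx.trans_le ht.1
  have hbound := abs_sub_le_sub_of_abs_deriv_le_deriv hxy
    (fun t ht => hasDerivAt_one_sub_rpow_sq_div_sq c (hpos t ht))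
    (g := fun u => -c / u ^ 2) (g' := fun t => 2 * c / t ^ 3) ?_ ?_
  · rw [abs_sub_comm]
    convert hbound using 1
    ring
  · intro t ht
    have ht0 := (hpos t ht).ne'
    refine (((hasDerivAt_pow 2 t).inv (pow_ne_zero 2 ht0)).const_mul (-c)).congr_deriv ?_
    field_simp
    ring
  · intro t ht
    have ht0 := hpos t (Ico_subset_Icc_self ht)
    have hs0 : 0 ≤ t ^ c := Real.rpow_nonneg ht0.le c
    have hs1 : t ^ c ≤ 1 := Real.rpow_le_one ht0.le (ht.2.le.trans hy) (zero_le_one.trans hc)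
    rw [abs_div, abs_of_pos (pow_pos ht0 3)]
    gcongr
    rw [abs_mul, abs_mul, abs_neg, abs_two, abs_of_nonneg (sub_nonneg.2 hs1),
      abs_of_nonneg (by nlinarith : 0 ≤ 1 + (c - 1) * t ^ c)]
    nlinarith [mul_nonneg (sub_nonneg.2 hc) hs0]

theorem stmt6 (x y l : ℝ) (hx : 0 < x) (hxy : x ≤ y) (hy : y ≤ 1)
    (hl0 : 0 < l) (hl1 : l ≤ 1) :
    ((1 - x ^ (1 / l)) ^ 2 / x ^ 2 - (1 - y ^ (1 / l)) ^ 2 / y ^ 2) ^ 2 ≤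
      (y ^ 2 - x ^ 2) / (l ^ 2 * x ^ 4 * y ^ 2) := by
  have hy0 : 0 < y := hx.trans_le hxy
  have hc : 1 ≤ 1 / l := by rw [le_div_iff₀ hl0]; linarith
  have hgap : 0 ≤ y ^ 2 - x ^ 2 := by nlinarith
  have hdiff := abs_sub_one_sub_rpow_sq_div_sq_le hc hx hxy hy
  calc _ ≤ (1 / l / x ^ 2 - 1 / l / y ^ 2) ^ 2 := sq_le_sq.2 (hdiff.trans (le_abs_self _))
    _ = (y ^ 2 - x ^ 2) / (l ^ 2 * x ^ 4 * y ^ 2) * ((y ^ 2 - x ^ 2) / y ^ 2) := by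
        field_simp
    _ ≤ (y ^ 2 - x ^ 2) / (l ^ 2 * x ^ 4 * y ^ 2) := by
        apply mul_le_of_le_one_right (by positivity)
        rw [div_le_one (by positivity)]
        linarith [sq_nonneg x]
end

section
/- For all real numbers $x, y$ with $0 < x \le y \le 1$ and all $\ell \in (0, 1/2]$, it holds that $\left((1 - x^{1/\ell}) x^{1/\ell - 2} - (1 - y^{1/\ell}) y^{1/\ell - 2}\right)^2 \le \frac{y^2 - x^2}{\ell^2 x^2}\, y^{2/\ell - 4}$. -/
theorem stmt7 (x y l : ℝ) (hx : 0 < x) (hxy : x ≤ y) (hy : y ≤ 1)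
    (hl0 : 0 < l) (hl1 : l ≤ 1 / 2) :
    ((1 - x ^ (1 / l)) * x ^ (1 / l - 2) - (1 - y ^ (1 / l)) * y ^ (1 / l - 2)) ^ 2 ≤
      (y ^ 2 - x ^ 2) / (l ^ 2 * x ^ 2) * y ^ (2 / l - 4) := by
  have hy0 : 0 < y := lt_of_lt_of_le hx hxy
  set a : ℝ := 1 / l with ha_def
  have ha2 : 2 ≤ a := by
    rw [ha_def, le_div_iff₀ hl0]; linarith
  set g : ℝ → ℝ := fun t => t ^ (a - 2) - t ^ (2 * a - 2) with hg
  set C : ℝ := a * y ^ (a - 2) / x with hC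
  have hrw : ∀ t : ℝ, 0 < t → (1 - t ^ a) * t ^ (a - 2) = g t := by
    intro t ht
    simp only [hg]
    rw [sub_mul, one_mul, ← Real.rpow_add ht]
    ring_nf
  have key : |g y - g x| ≤ C * (y - x) := by
    have hderiv : ∀ t ∈ Set.Icc x y,
        HasDerivWithinAt g
          ((a - 2) * t ^ (a - 2 - 1) - (2 * a - 2) * t ^ (2 * a - 2 - 1))
          (Set.Icc x y) t := by
      intro t ht
      have ht0 : 0 < t := lt_of_lt_of_le hx ht.1
      have h1 := Real.hasDerivAt_rpow_const (x := t) (p := a - 2) (Or.inl ht0.ne')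
      have h2 := Real.hasDerivAt_rpow_const (x := t) (p := 2 * a - 2) (Or.inl ht0.ne')
      exact (h1.sub h2).hasDerivWithinAt
    have hbound : ∀ t ∈ Set.Icc x y,
        ‖(a - 2) * t ^ (a - 2 - 1) - (2 * a - 2) * t ^ (2 * a - 2 - 1)‖ ≤ C := by
      intro t ht
      have ht0 : 0 < t := lt_of_lt_of_le hx ht.1
      have ht1 : t ≤ 1 := le_trans ht.2 hy
      have hp1 : (0:ℝ) ≤ t ^ (a - 2 - 1) := (Real.rpow_pos_of_pos ht0 _).le
      have hp2 : (0:ℝ) ≤ t ^ (2 * a - 2 - 1) := (Real.rpow_pos_of_pos ht0 _).le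
      have hle : t ^ (2 * a - 2 - 1) ≤ t ^ (a - 2 - 1) :=
        Real.rpow_le_rpow_of_exponent_ge ht0 ht1 (by linarith)
      have habs : |(a - 2) * t ^ (a - 2 - 1) - (2 * a - 2) * t ^ (2 * a - 2 - 1)|
          ≤ a * t ^ (a - 2 - 1) := by
        rw [abs_le]
        constructor
        · nlinarith [mul_le_mul_of_nonneg_left hle (by linarith : (0:ℝ) ≤ 2 * a - 2)]
        · nlinarith [mul_nonneg (by linarith : (0:ℝ) ≤ 2 * a - 2) hp2,
            mul_le_mul_of_nonneg_left (le_refl (t ^ (a - 2 - 1))) (by linarith : (0:ℝ) ≤ 2)]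
      have hsplit : t ^ (a - 2 - 1) = t ^ (a - 2) / t := by
        rw [Real.rpow_sub ht0, Real.rpow_one]
      have hmono : t ^ (a - 2) / t ≤ y ^ (a - 2) / x := by
        apply div_le_div₀ (Real.rpow_pos_of_pos hy0 _).le _ hx ht.1
        exact Real.rpow_le_rpow ht0.le ht.2 (by linarith)
      have ha0 : 0 < a := by linarith
      calc ‖(a - 2) * t ^ (a - 2 - 1) - (2 * a - 2) * t ^ (2 * a - 2 - 1)‖
          ≤ a * t ^ (a - 2 - 1) := habs
        _ ≤ a * (y ^ (a - 2) / x) := by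
            rw [hsplit] at *
            exact mul_le_mul_of_nonneg_left hmono ha0.le
        _ = C := by rw [hC]; ring
    have := (convex_Icc x y).norm_image_sub_le_of_norm_hasDerivWithin_le
      hderiv hbound (Set.left_mem_Icc.mpr hxy) (Set.right_mem_Icc.mpr hxy)
    simpa [Real.norm_eq_abs, abs_of_nonneg (sub_nonneg.mpr hxy)] using this
  -- now square
  rw [hrw x hx, hrw y hy0]
  have hCpos : 0 ≤ C := by
    have := (Real.rpow_pos_of_pos hy0 (a - 2)).le
    rw [hC]
    positivity
  have hsq : (g x - g y) ^ 2 ≤ (C * (y - x)) ^ 2 := by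
    have h1 : |g x - g y| ≤ C * (y - x) := by rwa [abs_sub_comm]
    calc (g x - g y) ^ 2 = |g x - g y| ^ 2 := (sq_abs _).symm
      _ ≤ (C * (y - x)) ^ 2 := by
          apply pow_le_pow_left₀ (abs_nonneg _) h1
  refine hsq.trans ?_
  have hB : y ^ (a - 2) * y ^ (a - 2) = y ^ (2 / l - 4) := by
    rw [← Real.rpow_add hy0]
    congr 1
    rw [ha_def]
    ring
  have hal : a * l = 1 := by
    rw [ha_def]; field_simp
  have hBpos : 0 < y ^ (a - 2) := Real.rpow_pos_of_pos hy0 _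
  rw [← hB, hC]
  rw [div_mul_eq_mul_div, div_pow, mul_pow, mul_pow, div_mul_eq_mul_div,
    div_le_div_iff₀ (by positivity) (by positivity)]
  have h1 : (y - x) ^ 2 ≤ y ^ 2 - x ^ 2 := by nlinarith
  have h2 : a ^ 2 * l ^ 2 = 1 := by nlinarith
  calc a ^ 2 * (y ^ (a - 2)) ^ 2 * (y - x) ^ 2 * (l ^ 2 * x ^ 2)
      = (a ^ 2 * l ^ 2) * ((y ^ (a - 2)) ^ 2 * (y - x) ^ 2 * x ^ 2) := by ring
    _ = (y ^ (a - 2)) ^ 2 * (y - x) ^ 2 * x ^ 2 := by rw [h2, one_mul]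
    _ ≤ (y ^ (a - 2)) ^ 2 * (y ^ 2 - x ^ 2) * x ^ 2 := by
        apply mul_le_mul_of_nonneg_right _ (sq_nonneg x)
        exact mul_le_mul_of_nonneg_left h1 (sq_nonneg _)
    _ = (y ^ 2 - x ^ 2) * (y ^ (a - 2) * y ^ (a - 2)) * x ^ 2 := by ring
end

section
/- Let $b_0 > 0$, $p \in (0, 1)$, and let $d_1, \dots, d_T$ be vectors in $\mathbb{R}^d$. Let $(a_t)_{t \ge 1}$ be a nonincreasing sequence in $(0, 1]$ and set $q = (1-p)/2$ and $b_t = (b_0^{1/p} + \sum_{i=1}^t \|d_i\|^2)^p / a_{t+1}^q$. Then $\sum_{t=1}^{T} \frac{\|d_t\|^2}{b_t} \ge a_{T+1}^q \left(\sum_{i=1}^T \|d_i\|^2\right)^{1-p} - b_0^{1/p - 1}$. -/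
open Finset

/-!
Since `a` is nonincreasing and the partial sums grow, every `b t` with `t ≤ T` is at most
`b T = (B + X)^p / a (T+1)^q`, where `B = b₀^(1/p)` and `X = ∑ ‖d_i‖²`. Hence the sum is at least
`a (T+1)^q · X / (B + X)^p`, and `X / (B + X)^p = (B + X)^(1-p) - B / (B + X)^p ≥ X^(1-p) - B^(1-p)`,
with `B^(1-p) = b₀^(1/p - 1)`.
-/

lemma Real.rpow_one_sub_sub_rpow_one_sub_le_div_rpow {B X p : ℝ} (hB : 0 < B) (hX : 0 ≤ X)
    (hp0 : 0 ≤ p) (hp1 : p ≤ 1) :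
    X ^ (1 - p) - B ^ (1 - p) ≤ X / (B + X) ^ p := by
  have hBX : 0 < B + X := by linarith
  have split : X / (B + X) ^ p = (B + X) ^ (1 - p) - B / (B + X) ^ p := by
    rw [Real.rpow_sub hBX, Real.rpow_one, div_sub_div_same, add_sub_cancel_left]
  have hB_term : B / (B + X) ^ p ≤ B ^ (1 - p) := by
    rw [Real.rpow_sub hB, Real.rpow_one]
    gcongr
    linarith
  have hX_term : X ^ (1 - p) ≤ (B + X) ^ (1 - p) := by
    gcongr
    linarith
  linarith

lemma Finset.sum_div_le_sum_div_of_le {ι : Type*} {s : Finset ι} {x c : ι → ℝ} {M : ℝ}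
    (hx : ∀ i ∈ s, 0 ≤ x i) (hc : ∀ i ∈ s, 0 < c i) (hcM : ∀ i ∈ s, c i ≤ M) :
    (∑ i ∈ s, x i) / M ≤ ∑ i ∈ s, x i / c i := by
  rw [sum_div]
  exact sum_le_sum fun i hi => div_le_div_of_nonneg_left (hx i hi) (hc i hi) (hcM i hi)

lemma monotone_rpow_add_sum_Icc_div_rpow {x a : ℕ → ℝ} {B p q : ℝ} (hx : ∀ i, 0 ≤ x i)
    (hB : 0 ≤ B) (ha0 : ∀ t, 0 < a t) (ha : Antitone a) (hp : 0 ≤ p) (hq : 0 ≤ q) :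
    Monotone fun t => (B + ∑ i ∈ Icc 1 t, x i) ^ p / a (t + 1) ^ q := by
  intro m n hmn
  have hsum : ∑ i ∈ Icc 1 m, x i ≤ ∑ i ∈ Icc 1 n, x i :=
    sum_le_sum_of_subset_of_nonneg (Icc_subset_Icc_right hmn) fun i _ _ => hx i
  have hsum0 : 0 ≤ ∑ i ∈ Icc 1 m, x i := sum_nonneg fun i _ => hx i
  have han := ha0 (n + 1)
  dsimp only
  gcongr
  · exact Real.rpow_nonneg (by linarith) p
  · exact ha (by omega)

theorem stmt18_general {d : ℕ} (T : ℕ) (b₀ p : ℝ) (hb₀ : 0 < b₀)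
    (hp0 : 0 < p) (hp1 : p < 1) (v : ℕ → EuclideanSpace ℝ (Fin d))
    (a : ℕ → ℝ) (ha0 : ∀ t, 0 < a t) (ha1 : ∀ t, a t ≤ 1)
    (hmono : ∀ t, a (t + 1) ≤ a t) (b : ℕ → ℝ)
    (hb : ∀ t, b t =
      (b₀ ^ (1 / p) + ∑ i ∈ Icc 1 t, ‖v i‖ ^ 2) ^ p / a (t + 1) ^ ((1 - p) / 2)) :
    a (T + 1) ^ ((1 - p) / 2) * (∑ i ∈ Icc 1 T, ‖v i‖ ^ 2) ^ (1 - p) -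
        b₀ ^ (1 / p - 1) ≤
      ∑ t ∈ Icc 1 T, ‖v t‖ ^ 2 / b t := by
  set q := (1 - p) / 2
  set B := b₀ ^ (1 / p)
  set X := ∑ i ∈ Icc 1 T, ‖v i‖ ^ 2
  have hB : 0 < B := by positivity
  have hX : 0 ≤ X := by positivity
  have hq : 0 ≤ q := div_nonneg (by linarith) zero_le_two
  have haq1 : a (T + 1) ^ q ≤ 1 := Real.rpow_le_one (ha0 _).le (ha1 _) hq
  have hb_pos : ∀ t, 0 < b t := fun t => by
    have := ha0 (t + 1)
    rw [hb]
    positivity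
  have hb_le : ∀ t ∈ Icc 1 T, b t ≤ b T := fun t ht => by
    rw [hb, hb]
    exact monotone_rpow_add_sum_Icc_div_rpow (fun i => by positivity) hB.le ha0
      (antitone_nat_of_succ_le hmono) hp0.le hq (mem_Icc.1 ht).2
  have hb₀_pow : b₀ ^ (1 / p - 1) = B ^ (1 - p) := by
    rw [← Real.rpow_mul hb₀.le]
    congr 1
    field_simp
  have hBp : 0 ≤ B ^ (1 - p) := by positivity
  have haq := ha0 (T + 1)
  calc a (T + 1) ^ q * X ^ (1 - p) - b₀ ^ (1 / p - 1)
      ≤ a (T + 1) ^ q * (X ^ (1 - p) - B ^ (1 - p)) := by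
        rw [hb₀_pow]
        nlinarith
    _ ≤ a (T + 1) ^ q * (X / (B + X) ^ p) := by
        gcongr
        exact Real.rpow_one_sub_sub_rpow_one_sub_le_div_rpow hB hX hp0.le hp1.le
    _ = X / b T := by
        rw [show b T = (B + X) ^ p / a (T + 1) ^ q from hb T]
        field_simp
    _ ≤ ∑ t ∈ Icc 1 T, ‖v t‖ ^ 2 / b t :=
        sum_div_le_sum_div_of_le (fun i _ => by positivity) (fun i _ => hb_pos i) hb_le

theorem stmt18 {d : ℕ} (T : ℕ) (hT : 1 ≤ T) (b₀ p : ℝ) (hb₀ : 0 < b₀)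
    (hp0 : 0 < p) (hp1 : p < 1) (v : ℕ → EuclideanSpace ℝ (Fin d))
    (a : ℕ → ℝ) (ha0 : ∀ t, 0 < a t) (ha1 : ∀ t, a t ≤ 1)
    (hmono : ∀ t, a (t + 1) ≤ a t) (b : ℕ → ℝ)
    (hb : ∀ t, b t =
      (b₀ ^ (1 / p) + ∑ i ∈ Icc 1 t, ‖v i‖ ^ 2) ^ p / a (t + 1) ^ ((1 - p) / 2)) :
    a (T + 1) ^ ((1 - p) / 2) * (∑ i ∈ Icc 1 T, ‖v i‖ ^ 2) ^ (1 - p) -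
        b₀ ^ (1 / p - 1) ≤
      ∑ t ∈ Icc 1 T, ‖v t‖ ^ 2 / b t :=
  stmt18_general T b₀ p hb₀ hp0 hp1 v a ha0 ha1 hmono b hb
end
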